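/- For the weighted geometric-mean fusion of finitely many strictly positive PMFs with weights ω_b ≥ 0 summing to 1, f(s) = Π_b f_b(s)^{ω_b} / Σ_t Π_b f_b(t)^{ω_b}, the Kullback–Leibler divergence satisfies: for any PMF g strictly positive on S, Σ_b ω_b · KL(g ‖ f_b) ≥ KL(g ‖ f), i.e., the fused PMF is at least as close (in average KL sense) to any reference PMF as the weighted average of the inputs. -/

import Mathlib

/-!
Since `log f = ∑ b, ω b * log (fb b) - log c` is affine in the `log (fb b)` and `∑ b, ω b = 1`,
the identity `KL(g‖f) = ∑ b, ω b * KL(g‖fb b) + log c` holds exactly, for any `g` of total mass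
one. By weighted AM–GM, `c ≤ ∑ b, ω b * ∑ t, fb b t = 1`, so `log c ≤ 0`.
-/

open Finset Real

theorem sum_prod_rpow_le_one {ι S : Type*} [Fintype ι] [Fintype S]
    (p : ι → S → ℝ) (hp : ∀ b s, 0 ≤ p b s) (hpsum : ∀ b, ∑ s, p b s = 1)
    (ω : ι → ℝ) (hω0 : ∀ b, 0 ≤ ω b) (hω1 : ∑ b, ω b = 1) :
    ∑ s, ∏ b, p b s ^ ω b ≤ 1 :=
  calc ∑ s, ∏ b, p b s ^ ω b ≤ ∑ s, ∑ b, ω b * p b s :=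
        sum_le_sum fun s _ => geom_mean_le_arith_mean_weighted _ _ _
          (fun b _ => hω0 b) hω1 (fun b _ => hp b s)
    _ = ∑ b, ω b * ∑ s, p b s := by
        rw [sum_comm]
        simp only [mul_sum]
    _ = 1 := by simp only [hpsum, mul_one, hω1]

theorem mul_log_div_eq {x y : ℝ} (hy : y ≠ 0) : x * log (x / y) = x * log x - x * log y := by
  rcases eq_or_ne x 0 with rfl | hx
  · simp
  · rw [log_div hx hy, mul_sub]

theorem sum_mul_log_div_eq {S : Type*} [Fintype S] (g p : S → ℝ) (hp : ∀ s, p s ≠ 0) :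
    ∑ s, g s * log (g s / p s) = ∑ s, g s * log (g s) - ∑ s, g s * log (p s) := by
  rw [← sum_sub_distrib]
  exact sum_congr rfl fun s _ => mul_log_div_eq (hp s)

theorem log_prod_rpow {ι : Type*} [Fintype ι] (x ω : ι → ℝ) (hx : ∀ b, 0 < x b) :
    log (∏ b, x b ^ ω b) = ∑ b, ω b * log (x b) := by
  rw [log_prod fun b _ => (rpow_pos_of_pos (hx b) _).ne']
  exact sum_congr rfl fun b _ => log_rpow (hx b) _

theorem sum_mul_log_fused {ι S : Type*} [Fintype ι] [Fintype S]
    (p : ι → S → ℝ) (hp : ∀ b s, 0 < p b s) (ω : ι → ℝ)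
    (g : S → ℝ) (hgsum : ∑ s, g s = 1) {c : ℝ} (hc : 0 < c) :
    ∑ s, g s * log ((∏ b, p b s ^ ω b) / c) =
      ∑ b, ω b * ∑ s, g s * log (p b s) - log c := by
  have hlog : ∀ s, log ((∏ b, p b s ^ ω b) / c) = ∑ b, ω b * log (p b s) - log c :=
    fun s => by
      rw [log_div (prod_pos fun b _ => rpow_pos_of_pos (hp b s) _).ne' hc.ne',
        log_prod_rpow _ _ fun b => hp b s]
  simp only [hlog, mul_sub, sum_sub_distrib, ← sum_mul, hgsum, one_mul, mul_sum]
  rw [sum_comm]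
  simp only [mul_left_comm]

theorem stmt_18_general {S : Type*} [Fintype S] [Nonempty S] {m : ℕ}
    (fb : Fin m → S → ℝ) (hfbpos : ∀ b s, 0 < fb b s)
    (hfbsum : ∀ b, ∑ s, fb b s = 1)
    (ω : Fin m → ℝ) (hω0 : ∀ b, 0 ≤ ω b) (hω1 : ∑ b, ω b = 1)
    (g : S → ℝ) (hgsum : ∑ s, g s = 1)
    (c : ℝ) (hc : c = ∑ t, ∏ b, fb b t ^ ω b)
    (f : S → ℝ) (hf : ∀ s, f s = (∏ b, fb b s ^ ω b) / c) :
    ∑ s, g s * Real.log (g s / f s) ≤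
      ∑ b, ω b * ∑ s, g s * Real.log (g s / fb b s) := by
  have hc_pos : 0 < c := hc ▸ sum_pos (fun t _ => prod_pos fun b _ =>
    rpow_pos_of_pos (hfbpos b t) _) univ_nonempty
  have hc_le_one : c ≤ 1 := hc ▸ sum_prod_rpow_le_one fb (fun b s => (hfbpos b s).le) hfbsum
    ω hω0 hω1
  have hf_ne : ∀ s, f s ≠ 0 := fun s => (hf s).symm ▸ (div_pos
    (prod_pos fun b _ => rpow_pos_of_pos (hfbpos b s) _) hc_pos).ne'
  rw [sum_mul_log_div_eq g f hf_ne]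
  simp only [sum_mul_log_div_eq g _ fun s => (hfbpos _ s).ne', hf,
    sum_mul_log_fused fb hfbpos ω g hgsum hc_pos, mul_sub, sum_sub_distrib, ← sum_mul, hω1,
    one_mul]
  linarith [log_nonpos hc_pos.le hc_le_one]

/-- The weighted geometric-mean (Chernoff) fusion of finitely many strictly
positive PMFs is at least as close in averaged Kullback–Leibler divergence to any
strictly positive reference PMF as the weighted average of the inputs:
`∑_b ω_b · KL(g‖f_b) ≥ KL(g‖f)`. -/
theorem stmt_18 {S : Type*} [Fintype S] [Nonempty S] {m : ℕ}
    (fb : Fin m → S → ℝ) (hfbpos : ∀ b s, 0 < fb b s)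
    (hfbsum : ∀ b, ∑ s, fb b s = 1)
    (ω : Fin m → ℝ) (hω0 : ∀ b, 0 ≤ ω b) (hω1 : ∑ b, ω b = 1)
    (g : S → ℝ) (hgpos : ∀ s, 0 < g s) (hgsum : ∑ s, g s = 1)
    (c : ℝ) (hc : c = ∑ t, ∏ b, fb b t ^ ω b)
    (f : S → ℝ) (hf : ∀ s, f s = (∏ b, fb b s ^ ω b) / c) :
    ∑ s, g s * Real.log (g s / f s) ≤
      ∑ b, ω b * ∑ s, g s * Real.log (g s / fb b s) :=
  stmt_18_general fb hfbpos hfbsum ω hω0 hω1 g hgsum c hc f hf
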